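/- For the 27 dice D1,…,D27 defined in the context, every one of the nine dice D19,…,D27 beats every one of the nine dice D1,…,D9 with probability 5/9. -/
import Mathlib


/-- The number of the 9 pairs `(i, j)` for which face `i` of die `X` shows a
greater number than face `j` of die `Y` (each die is a triple of naturals,
each value appearing with probability 1/3). -/
def winPairs (X Y : Fin 3 → ℕ) : ℕ :=
  ((Finset.univ : Finset (Fin 3 × Fin 3)).filter (fun p => Y p.2 < X p.1)).card

/-- Die `X` beats die `Y` with probability 5/9, i.e. exactly 5 of the 9
pairs of faces are wins for `X`. -/
def BeatsFiveNinths (X Y : Fin 3 → ℕ) : Prop := winPairs X Y = 5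

/-- The 27 dice D1, ..., D27 (indexed here by 0, ..., 26). -/
def D : Fin 27 → Fin 3 → ℕ :=
  ![![222, 489, 954], ![221, 488, 956], ![223, 487, 955],
    ![299, 464, 932], ![298, 466, 931], ![297, 465, 933],
    ![244, 412, 979], ![246, 411, 978], ![245, 413, 977],
    ![122, 689, 854], ![121, 688, 856], ![123, 687, 855],
    ![199, 664, 832], ![198, 666, 831], ![197, 665, 833],
    ![144, 612, 879], ![146, 611, 878], ![145, 613, 877],
    ![322, 589, 754], ![321, 588, 756], ![323, 587, 755],
    ![399, 564, 732], ![398, 566, 731], ![397, 565, 733],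
    ![344, 512, 779], ![346, 511, 778], ![345, 513, 777]]

/-- Every one of the nine dice D19, ..., D27 beats every one of the nine dice
D1, ..., D9 with probability 5/9. -/
theorem third_nine_beat_first_nine :
    ∀ i j : Fin 9,
      BeatsFiveNinths (D ⟨18 + i.val, by omega⟩) (D ⟨j.val, by omega⟩) := by
  unfold BeatsFiveNinths winPairs D
  decide
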